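/- arXiv:2602.13974 — 7 statements merged into one kernel-verified Lean document; each statement's English description precedes it below -/
import Mathlib

section
/- For nonzero vectors x and y in a real normed space X, ‖x + y‖ ≤ ‖x‖ + ‖y‖ − (2 − ‖x/‖x‖ + y/‖y‖‖)·min(‖x‖, ‖y‖). -/
/-!
If `‖y‖ ≤ ‖x‖`, write `x + y = (‖x‖ - ‖y‖) • x̂ + ‖y‖ • (x̂ + ŷ)` with `x̂ = ‖x‖⁻¹ • x`,
`ŷ = ‖y‖⁻¹ • y`, and apply the triangle inequality to this splitting instead of to `x + y`.
-/

open NormedSpace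

section

variable {V : Type*} [NormedAddCommGroup V] [NormedSpace ℝ V]

lemma norm_normalize_le_one (x : V) : ‖normalize x‖ ≤ 1 :=
  mem_closedBall_zero_iff.mp (inv_norm_smul_mem_unitClosedBall x)

lemma norm_add_le_of_norm_le_norm {x y : V} (h : ‖y‖ ≤ ‖x‖) :
    ‖x + y‖ ≤ ‖x‖ + ‖y‖ - (2 - ‖normalize x + normalize y‖) * ‖y‖ := by
  have hsplit : x + y = (‖x‖ - ‖y‖) • normalize x + ‖y‖ • (normalize x + normalize y) := by
    rw [smul_add, ← add_assoc, ← add_smul, sub_add_cancel, norm_smul_normalize,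
      norm_smul_normalize]
  calc ‖x + y‖
      ≤ (‖x‖ - ‖y‖) * ‖normalize x‖ + ‖y‖ * ‖normalize x + normalize y‖ := by
        rw [hsplit, ← norm_smul_of_nonneg (sub_nonneg.2 h),
          ← norm_smul_of_nonneg (norm_nonneg y)]
        exact norm_add_le _ _
    _ ≤ (‖x‖ - ‖y‖) * 1 + ‖y‖ * ‖normalize x + normalize y‖ := by
        gcongr
        exact norm_normalize_le_one x
    _ = ‖x‖ + ‖y‖ - (2 - ‖normalize x + normalize y‖) * ‖y‖ := by ring

end

theorem stmt_2_general {X : Type*} [NormedAddCommGroup X] [NormedSpace ℝ X] (x y : X) :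
    ‖x + y‖ ≤ ‖x‖ + ‖y‖ - (2 - ‖(‖x‖⁻¹ • x) + (‖y‖⁻¹ • y)‖) * min ‖x‖ ‖y‖ := by
  rcases le_total ‖y‖ ‖x‖ with h | h
  · rw [min_eq_right h]
    exact norm_add_le_of_norm_le_norm h
  · rw [min_eq_left h, add_comm x, add_comm (‖x‖⁻¹ • x), add_comm ‖x‖]
    exact norm_add_le_of_norm_le_norm h

theorem stmt_2 {X : Type*} [NormedAddCommGroup X] [NormedSpace ℝ X] (x y : X)
    (hx : x ≠ 0) (hy : y ≠ 0) :
    ‖x + y‖ ≤ ‖x‖ + ‖y‖ - (2 - ‖(‖x‖⁻¹ • x) + (‖y‖⁻¹ • y)‖) * min ‖x‖ ‖y‖ :=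
  stmt_2_general x y
end

section
/- Let X be a real Banach space and t > 0. Then A_t^B(X) ≥ √2 · min{1, t}, where A_t^B(X) = sup{(‖x + t·y‖ + ‖t·x − y‖)/2 : x, y unit vectors with x Birkhoff-orthogonal to y}. -/
/-!
Take unit vectors `z, v` in the plane of a Birkhoff-orthogonal pair that maximize `|ω z v|` for a
determinant form `ω` of that plane. Replacing `z` by the normalized nearest point to `0` on the line
`z + ℝ v` gives `u ⊥ v` with `|ω u v|` still maximal, and comparing with the unit vectors
`(u ± v) / ‖u ± v‖` yields `‖u + v‖ * ‖u - v‖ ≥ 2` (false for general orthogonal pairs, e.g.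
`(1/2, ±1/2)` in `ℓ¹`). Hence `φ t = ‖u + t v‖ + ‖t u - v‖` has `φ 1 ≥ 2√2`; as `φ` is convex with
`φ t ≤ 2 (1 + |t|)`, this forces `φ t ≥ 2√2 min 1 t`.
-/

open Metric Set Filter

def BirkhoffOrth {E : Type*} [NormedAddCommGroup E] [Module ℝ E] (x y : E) : Prop :=
  ∀ s : ℝ, ‖x + s • y‖ ≥ ‖x‖

section BirkhoffOrth

variable {E : Type*} [NormedAddCommGroup E] [NormedSpace ℝ E]

lemma BirkhoffOrth.smul_left {x y : E} (h : BirkhoffOrth x y) (c : ℝ) :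
    BirkhoffOrth (c • x) y := by
  intro s
  rcases eq_or_ne c 0 with rfl | hc
  · simp
  have : c • x + s • y = c • (x + (s / c) • y) := by
    rw [smul_add, smul_smul, mul_div_cancel₀ _ hc]
  rw [this, norm_smul, norm_smul]
  exact mul_le_mul_of_nonneg_left (h _) (norm_nonneg c)

lemma exists_birkhoffOrth_add_smul (z : E) {v : E} (hv : v ≠ 0) :
    ∃ s₀ : ℝ, BirkhoffOrth (z + s₀ • v) v := by
  have hlim : Tendsto (fun s : ℝ => ‖z + s • v‖) (cocompact ℝ) atTop := by
    refine tendsto_atTop_mono (fun s => ?_) <|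
      tendsto_atTop_add_const_right _ (-‖z‖) <|
        tendsto_norm_cocompact_atTop.atTop_mul_const (norm_pos_iff.mpr hv)
    have := norm_sub_norm_le (s • v) (-z)
    rw [sub_neg_eq_add, add_comm, norm_neg, norm_smul] at this
    linarith
  obtain ⟨s₀, hs₀⟩ := (by fun_prop : Continuous fun s : ℝ => ‖z + s • v‖).exists_forall_le hlim
  refine ⟨s₀, fun s => ?_⟩
  rw [add_assoc, ← add_smul]
  exact hs₀ _

lemma BirkhoffOrth.linearIndependent {x y : E} (h : BirkhoffOrth x y) (hx : x ≠ 0)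
    (hy : y ≠ 0) : LinearIndependent ℝ ![x, y] := by
  refine (LinearIndependent.pair_iff' hx).mpr fun a hxy => ?_
  rcases eq_or_ne a 0 with rfl | ha
  · exact hy (by rw [← hxy, zero_smul])
  have := h (-a⁻¹)
  rw [← hxy, smul_smul, neg_mul, inv_mul_cancel₀ ha, neg_one_smul, add_neg_cancel,
    norm_zero] at this
  exact hx (norm_le_zero_iff.mp this)

section MaximalPair

variable (ω : E →L[ℝ] E →L[ℝ] ℝ)

lemma apply_swap_of_alternating (hω : ∀ p, ω p p = 0) (p q : E) : ω q p = -ω p q := by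
  have := hω (p + q)
  simp only [map_add, add_apply, hω] at this
  linarith

lemma exists_unit_pair_forall_abs_le [ProperSpace E] {x : E} (hx : ‖x‖ = 1) :
    ∃ z v : E, ‖z‖ = 1 ∧ ‖v‖ = 1 ∧
      ∀ p q : E, ‖p‖ = 1 → ‖q‖ = 1 → |ω p q| ≤ |ω z v| := by
  have hx : x ∈ sphere (0 : E) 1 := mem_sphere_zero_iff_norm.mpr hx
  obtain ⟨⟨z, v⟩, ⟨hz, hv⟩, hmax⟩ :=
    ((isCompact_sphere (0 : E) 1).prod (isCompact_sphere 0 1)).exists_isMaxOn ⟨(x, x), hx, hx⟩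
      (by fun_prop : Continuous fun r : E × E => |ω r.1 r.2|).continuousOn
  refine ⟨z, v, mem_sphere_zero_iff_norm.mp hz, mem_sphere_zero_iff_norm.mp hv,
    fun p q hp hq => ?_⟩
  exact hmax (mk_mem_prod (mem_sphere_zero_iff_norm.mpr hp) (mem_sphere_zero_iff_norm.mpr hq))

lemma two_le_norm_add_mul_norm_sub_of_forall_abs_le (hω : ∀ p, ω p p = 0) {u v : E}
    (hmax : ∀ p q : E, ‖p‖ = 1 → ‖q‖ = 1 → |ω p q| ≤ |ω u v|) (huv : ω u v ≠ 0) :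
    2 ≤ ‖u + v‖ * ‖u - v‖ := by
  have hadd : u + v ≠ 0 := fun h => huv <| by
    have : ω (u + v) v = ω u v := by simp [hω]
    rwa [h, map_zero, zero_apply, eq_comm] at this
  have hsub : u - v ≠ 0 := fun h => huv <| by
    have : ω (u - v) v = ω u v := by simp [hω]
    rwa [h, map_zero, zero_apply, eq_comm] at this
  have hdiag : ω (‖u + v‖⁻¹ • (u + v)) (‖u - v‖⁻¹ • (u - v)) =
      -2 * (‖u + v‖ * ‖u - v‖)⁻¹ * ω u v := by
    simp only [map_smul, map_add, map_sub, smul_apply, add_apply, hω,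
      apply_swap_of_alternating ω hω u v, smul_eq_mul, mul_inv]
    ring
  have := hmax (‖u + v‖⁻¹ • (u + v)) (‖u - v‖⁻¹ • (u - v))
    (by simpa using norm_smul_inv_norm (𝕜 := ℝ) hadd)
    (by simpa using norm_smul_inv_norm (𝕜 := ℝ) hsub)
  have hab : 0 < ‖u + v‖ * ‖u - v‖ := by positivity
  rw [hdiag, abs_mul, abs_mul, abs_neg, abs_two, abs_of_pos (inv_pos.mpr hab)] at this
  have := le_of_mul_le_mul_right (this.trans_eq (one_mul _).symm) (abs_pos.mpr huv)
  rwa [← div_eq_mul_inv, div_le_one hab] at this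

lemma exists_birkhoffOrth_two_le_norm_add_mul_norm_sub_of_alternating [ProperSpace E]
    (hω : ∀ p, ω p p = 0) {x y : E} (hx : ‖x‖ = 1) (hy : ‖y‖ = 1) (hxy : ω x y ≠ 0) :
    ∃ u v : E, ‖u‖ = 1 ∧ ‖v‖ = 1 ∧ BirkhoffOrth u v ∧ 2 ≤ ‖u + v‖ * ‖u - v‖ := by
  obtain ⟨z, v, hz, hv, hmax⟩ := exists_unit_pair_forall_abs_le ω hx
  have hzv : 0 < |ω z v| := (abs_pos.mpr hxy).trans_le (hmax x y hx hy)
  obtain ⟨s₀, horth⟩ := exists_birkhoffOrth_add_smul z (norm_pos_iff.mp (hv ▸ one_pos))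
  set w := z + s₀ • v
  have hωw : ω w v = ω z v := by simp [w, hω]
  have hw : w ≠ 0 := fun h => by simp [← hωw, h] at hzv
  have hw1 : ‖w‖ ≤ 1 := by simpa [w, hz] using horth (-s₀)
  have hu : ‖‖w‖⁻¹ • w‖ = 1 := by simpa using norm_smul_inv_norm (𝕜 := ℝ) hw
  have hωu : |ω z v| ≤ |ω (‖w‖⁻¹ • w) v| := by
    rw [map_smul, smul_apply, hωw, smul_eq_mul, abs_mul, abs_inv, abs_norm]
    exact le_mul_of_one_le_left (abs_nonneg _) (one_le_inv₀ (norm_pos_iff.mpr hw) |>.mpr hw1)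
  refine ⟨_, v, hu, hv, horth.smul_left _, ?_⟩
  exact two_le_norm_add_mul_norm_sub_of_forall_abs_le ω hω
    (fun p q hp hq => (hmax p q hp hq).trans hωu) (abs_pos.mp (hzv.trans_le hωu))

end MaximalPair

lemma BirkhoffOrth.exists_two_le_norm_add_mul_norm_sub {x y : E} (hx : ‖x‖ = 1) (hy : ‖y‖ = 1)
    (h : BirkhoffOrth x y) :
    ∃ u v : E, ‖u‖ = 1 ∧ ‖v‖ = 1 ∧ BirkhoffOrth u v ∧ 2 ≤ ‖u + v‖ * ‖u - v‖ := by
  let b := Module.Basis.span (h.linearIndependent (norm_ne_zero_iff.mp (hx ▸ one_ne_zero))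
    (norm_ne_zero_iff.mp (hy ▸ one_ne_zero)))
  have := Module.Finite.of_basis b
  let f (i : Fin 2) := LinearMap.toContinuousLinearMap (b.coord i)
  let ω := (f 0).smulRight (f 1) - (f 1).smulRight (f 0)
  obtain ⟨u, v, hu, hv, huv, hmul⟩ :=
    exists_birkhoffOrth_two_le_norm_add_mul_norm_sub_of_alternating ω
      (fun p => by simp [ω]; ring) (x := b 0) (y := b 1) (by simpa [b]) (by simpa [b])
      (by simp [ω, f])
  exact ⟨u, v, by simpa using hu, by simpa using hv, fun s => by exact_mod_cast huv s,
    by exact_mod_cast hmul⟩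

lemma convexOn_norm_add_smul (x y : E) : ConvexOn ℝ univ fun t : ℝ => ‖x + t • y‖ :=
  ((convexOn_norm convex_univ).translate_right x).comp_linearMap
    (LinearMap.toSpanSingleton ℝ E y)

lemma norm_add_smul_add_norm_smul_sub_le {x y : E} (hx : ‖x‖ = 1) (hy : ‖y‖ = 1) (t : ℝ) :
    ‖x + t • y‖ + ‖t • x - y‖ ≤ 2 * (1 + |t|) := by
  have h1 := norm_add_le x (t • y)
  have h2 := norm_sub_le (t • x) y
  rw [norm_smul, Real.norm_eq_abs] at h1 h2
  rw [hx, hy] at *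
  linarith

lemma convexOn_norm_add_smul_add_norm_smul_sub (x y : E) :
    ConvexOn ℝ univ fun t : ℝ => ‖x + t • y‖ + ‖t • x - y‖ := by
  refine (convexOn_norm_add_smul x y).add ?_
  simpa only [neg_add_eq_sub] using convexOn_norm_add_smul (-y) x

end BirkhoffOrth

lemma two_mul_sqrt_two_le_add_of_two_le_mul {a b : ℝ} (ha : 0 ≤ a) (hb : 0 ≤ b)
    (h : 2 ≤ a * b) : 2 * √2 ≤ a + b := by
  nlinarith [sq_nonneg (a - b), Real.sq_sqrt (zero_le_two (α := ℝ)), Real.sqrt_nonneg 2]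

lemma two_mul_sqrt_two_mul_min_le_of_convexOn {φ : ℝ → ℝ} (hφ : ConvexOn ℝ univ φ)
    (hle : ∀ t, φ t ≤ 2 * (1 + |t|)) (h1 : 2 * √2 ≤ φ 1) (t : ℝ) :
    2 * √2 * min 1 t ≤ φ t := by
  have hs : √2 * √2 = 2 := Real.mul_self_sqrt zero_le_two
  have hs1 : 1 ≤ √2 := Real.one_le_sqrt.mpr one_le_two
  rcases le_total 1 t with ht | ht
  · have ht0 : 0 < t := by linarith
    have hconv := hφ.2 (mem_univ 0) (mem_univ t) (sub_nonneg.mpr (inv_le_one_of_one_le₀ ht))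
      (inv_nonneg.mpr ht0.le) (sub_add_cancel 1 t⁻¹)
    rw [smul_zero, zero_add, smul_eq_mul, inv_mul_cancel₀ ht0.ne', smul_eq_mul,
      smul_eq_mul] at hconv
    have key : t * φ 1 ≤ (t - 1) * φ 0 + φ t := by
      calc t * φ 1 ≤ t * ((1 - t⁻¹) * φ 0 + t⁻¹ * φ t) := mul_le_mul_of_nonneg_left hconv ht0.le
        _ = (t - 1) * φ 0 + φ t := by field_simp
    have h0 := hle 0
    rw [abs_zero, add_zero, mul_one] at h0
    rw [min_eq_left ht, mul_one]
    nlinarith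
  · -- The point `1 + √2` is chosen so that `φ (1 + √2) ≤ 2 (2 + √2)` turns `key` into
    -- exactly `2√2 t ≤ φ t`.
    have hd : 0 < √2 + 1 - t := by linarith
    have hconv := hφ.2 (mem_univ t) (mem_univ (1 + √2)) (div_nonneg (Real.sqrt_nonneg 2) hd.le)
      (div_nonneg (sub_nonneg.mpr ht) hd.le) (by field_simp; ring)
    have hpt : (√2 / (√2 + 1 - t)) • t + ((1 - t) / (√2 + 1 - t)) • (1 + √2) = 1 := by
      simp only [smul_eq_mul]; field_simp; ring
    rw [hpt, smul_eq_mul, smul_eq_mul] at hconv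
    have key : (√2 + 1 - t) * φ 1 ≤ √2 * φ t + (1 - t) * φ (1 + √2) := by
      calc (√2 + 1 - t) * φ 1
          ≤ (√2 + 1 - t) * (√2 / (√2 + 1 - t) * φ t + (1 - t) / (√2 + 1 - t) * φ (1 + √2)) :=
            mul_le_mul_of_nonneg_left hconv hd.le
        _ = √2 * φ t + (1 - t) * φ (1 + √2) := by field_simp
    have h2 := hle (1 + √2)
    rw [abs_of_pos (by positivity)] at h2
    rw [min_eq_right ht]
    nlinarith

theorem stmt_5_general {X : Type*} [NormedAddCommGroup X] [NormedSpace ℝ X]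
    (t : ℝ)
    (hex : ∃ x y : X, ‖x‖ = 1 ∧ ‖y‖ = 1 ∧ ∀ s : ℝ, ‖x + s • y‖ ≥ ‖x‖) :
    Real.sqrt 2 * min 1 t ≤
    sSup {r : ℝ | ∃ x y : X, ‖x‖ = 1 ∧ ‖y‖ = 1 ∧ (∀ s : ℝ, ‖x + s • y‖ ≥ ‖x‖) ∧
      r = (‖x + t • y‖ + ‖t • x - y‖) / 2} := by
  obtain ⟨x, y, hx, hy, hxy⟩ := hex
  obtain ⟨u, v, hu, hv, huv, hmul⟩ := BirkhoffOrth.exists_two_le_norm_add_mul_norm_sub hx hy hxy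
  refine le_csSup_of_le ⟨1 + |t|, ?_⟩ ⟨u, v, hu, hv, huv, rfl⟩ ?_
  · rintro r ⟨x, y, hx, hy, -, rfl⟩
    linarith [norm_add_smul_add_norm_smul_sub_le hx hy t]
  have := two_mul_sqrt_two_mul_min_le_of_convexOn (convexOn_norm_add_smul_add_norm_smul_sub u v)
    (norm_add_smul_add_norm_smul_sub_le hu hv)
    (by simpa using two_mul_sqrt_two_le_add_of_two_le_mul (norm_nonneg _) (norm_nonneg _) hmul) t
  linarith

theorem stmt_5 {X : Type*} [NormedAddCommGroup X] [NormedSpace ℝ X] [CompleteSpace X]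
    (t : ℝ) (ht : 0 < t)
    (hex : ∃ x y : X, ‖x‖ = 1 ∧ ‖y‖ = 1 ∧ ∀ s : ℝ, ‖x + s • y‖ ≥ ‖x‖) :
    Real.sqrt 2 * min 1 t ≤
    sSup {r : ℝ | ∃ x y : X, ‖x‖ = 1 ∧ ‖y‖ = 1 ∧ (∀ s : ℝ, ‖x + s • y‖ ≥ ‖x‖) ∧
      r = (‖x + t • y‖ + ‖t • x - y‖) / 2} :=
  stmt_5_general t hex
end

section
/- Let X be a real normed space, t > 0, and x, y unit vectors with x Birkhoff-orthogonal to y. If t ≥ 1, then (‖x+ty‖+‖tx−y‖)/2 ≥ (‖x+y‖+‖x−y‖)/2. -/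
theorem stmt_6 {X : Type*} [NormedAddCommGroup X] [NormedSpace ℝ X] (x y : X)
    (hx : ‖x‖ = 1) (hy : ‖y‖ = 1) (hB : ∀ s : ℝ, ‖x + s • y‖ ≥ ‖x‖)
    (t : ℝ) (ht : 1 ≤ t) :
    (‖x + y‖ + ‖x - y‖) / 2 ≤ (‖x + t • y‖ + ‖t • x - y‖) / 2 := by
  have hne : t + 1 ≠ 0 := by linarith
  set l : ℝ := (t - 1) / (t + 1) with hl
  have hlnn : 0 ≤ l := div_nonneg (by linarith) (by linarith)
  have h1 : x + y = l • (x - y) + ((2 / (t + 1)) • (x + t • y)) := by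
    rw [hl]
    match_scalars <;> field_simp <;> ring
  have h2 : x - y = l • (-(x + y)) + ((2 / (t + 1)) • (t • x - y)) := by
    rw [hl]
    match_scalars <;> field_simp <;> ring
  have n1 : ‖x + y‖ ≤ l * ‖x - y‖ + (2 / (t + 1)) * ‖x + t • y‖ := by
    calc ‖x + y‖ = ‖l • (x - y) + ((2 / (t + 1)) • (x + t • y))‖ := by rw [← h1]
    _ ≤ ‖l • (x - y)‖ + ‖(2 / (t + 1)) • (x + t • y)‖ := norm_add_le _ _
    _ = l * ‖x - y‖ + (2 / (t + 1)) * ‖x + t • y‖ := by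
        rw [norm_smul, norm_smul, Real.norm_eq_abs, Real.norm_eq_abs,
          abs_of_nonneg hlnn, abs_of_nonneg (by positivity)]
  have n2 : ‖x - y‖ ≤ l * ‖x + y‖ + (2 / (t + 1)) * ‖t • x - y‖ := by
    calc ‖x - y‖ = ‖l • (-(x + y)) + ((2 / (t + 1)) • (t • x - y))‖ := by rw [← h2]
    _ ≤ ‖l • (-(x + y))‖ + ‖(2 / (t + 1)) • (t • x - y)‖ := norm_add_le _ _
    _ = l * ‖x + y‖ + (2 / (t + 1)) * ‖t • x - y‖ := by
        rw [norm_smul, norm_smul, Real.norm_eq_abs, Real.norm_eq_abs,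
          abs_of_nonneg hlnn, abs_of_nonneg (by positivity), norm_neg]
  have key : (1 - l) * (‖x + y‖ + ‖x - y‖) ≤
      (2 / (t + 1)) * (‖x + t • y‖ + ‖t • x - y‖) := by nlinarith [n1, n2]
  have hll : 1 - l = 2 / (t + 1) := by rw [hl]; field_simp; ring
  rw [hll] at key
  have hpos : (0:ℝ) < 2 / (t + 1) := by positivity
  have := (mul_le_mul_iff_right₀ hpos).mp key
  linarith
end

section
/- Let X be a real normed space, t > 0, and x, y unit vectors. Then (‖x + t·y‖ + ‖t·x − y‖)/2 ≤ 1 + t − (2 − (‖x+y‖ + ‖x−y‖)/2)·min{1, t}. -/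
theorem norm_smul_add_smul_le_min_mul_norm_add_add_abs_sub {X : Type*} [SeminormedAddCommGroup X]
    [NormedSpace ℝ X] {x y : X} (hx : ‖x‖ ≤ 1) (hy : ‖y‖ ≤ 1) {a b : ℝ} (ha : 0 ≤ a) (hb : 0 ≤ b) :
    ‖a • x + b • y‖ ≤ min a b * ‖x + y‖ + |a - b| := by
  wlog hab : a ≤ b generalizing a b x y
  · simpa only [add_comm, min_comm, abs_sub_comm] using this hy hx hb ha (le_of_not_ge hab)
  calc ‖a • x + b • y‖ = ‖a • (x + y) + (b - a) • y‖ := by congr 1; module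
    _ ≤ a * ‖x + y‖ + (b - a) * ‖y‖ := by
        grw [norm_add_le, norm_smul_of_nonneg ha, norm_smul_of_nonneg (sub_nonneg.2 hab)]
    _ ≤ a * ‖x + y‖ + (b - a) := by gcongr; nlinarith
    _ = min a b * ‖x + y‖ + |a - b| := by
        rw [min_eq_left hab, abs_of_nonpos (sub_nonpos.2 hab), neg_sub]

theorem stmt_8 {X : Type*} [NormedAddCommGroup X] [NormedSpace ℝ X] (x y : X)
    (hx : ‖x‖ = 1) (hy : ‖y‖ = 1) (t : ℝ) (ht : 0 < t) :
    (‖x + t • y‖ + ‖t • x - y‖) / 2 ≤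
      1 + t - (2 - (‖x + y‖ + ‖x - y‖) / 2) * min 1 t := by
  have h₁ : ‖x + t • y‖ ≤ min 1 t * ‖x + y‖ + |1 - t| := by
    simpa only [one_smul] using
      norm_smul_add_smul_le_min_mul_norm_add_add_abs_sub hx.le hy.le zero_le_one ht.le
  have h₂ : ‖t • x - y‖ ≤ min 1 t * ‖x - y‖ + |1 - t| := by
    simpa only [one_smul, smul_neg, ← sub_eq_add_neg, min_comm, abs_sub_comm, norm_neg] using
      norm_smul_add_smul_le_min_mul_norm_add_add_abs_sub hx.le (norm_neg y ▸ hy).le ht.le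
        zero_le_one (y := -y)
  have h₃ : 1 + t = 2 * min 1 t + |1 - t| := by
    rw [← max_sub_min_eq_abs', ← min_add_max]; ring
  rw [h₃]; linarith
end

section
/- In ℝ² with the norm ‖(x₁,x₂)‖ equal to ‖·‖₁ when x₁x₂ ≤ 0 and ‖·‖_∞ when x₁x₂ ≥ 0, the vectors x = (1,0) and y = (1,1) are unit vectors, x is Birkhoff-orthogonal to y, and for every t ≥ 1, ‖x + t·y‖ = 1 + t and ‖t·x − y‖ = t. -/
/-!
The two formulas for the norm agree where `x₁x₂ = 0`, and on every quadrant the norm dominates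
`|x₁ - x₂|` (for `‖·‖_∞` because `x₁` and `x₂` have the same sign there). Since `x + s • y = (1 + s, s)`
has `x₁ - x₂ = 1`, this gives the Birkhoff orthogonality; the identities for `t ≥ 1` are read off
from the formula on the relevant quadrant.
-/

noncomputable def mixedNorm (z : ℝ × ℝ) : ℝ :=
  if 0 ≤ z.1 * z.2 then max |z.1| |z.2| else |z.1| + |z.2|

namespace mixedNorm

theorem eq_max_of_mul_nonneg {z : ℝ × ℝ} (h : 0 ≤ z.1 * z.2) :
    mixedNorm z = max |z.1| |z.2| :=
  if_pos h

theorem eq_abs_add_abs_of_mul_nonpos {z : ℝ × ℝ} (h : z.1 * z.2 ≤ 0) :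
    mixedNorm z = |z.1| + |z.2| := by
  rcases h.lt_or_eq with hneg | hzero
  · exact if_neg hneg.not_ge
  · rcases mul_eq_zero.mp hzero with h1 | h2
    · simp [eq_max_of_mul_nonneg hzero.ge, h1]
    · simp [eq_max_of_mul_nonneg hzero.ge, h2]

theorem abs_fst_sub_snd_le (z : ℝ × ℝ) : |z.1 - z.2| ≤ mixedNorm z := by
  rcases le_total 0 (z.1 * z.2) with h | h
  · rw [eq_max_of_mul_nonneg h]
    have hl := le_max_left |z.1| |z.2|
    have hr := le_max_right |z.1| |z.2|
    rw [abs_le]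
    rcases abs_cases z.1 with ⟨h1, _⟩ | ⟨h1, _⟩ <;> rcases abs_cases z.2 with ⟨h2, _⟩ | ⟨h2, _⟩ <;>
      constructor <;> nlinarith
  · rw [eq_abs_add_abs_of_mul_nonpos h]
    exact abs_sub _ _

end mixedNorm

theorem stmt_14 (N : ℝ × ℝ → ℝ)
    (hN : ∀ z : ℝ × ℝ, N z = if 0 ≤ z.1 * z.2 then max |z.1| |z.2| else |z.1| + |z.2|)
    (x y : ℝ × ℝ) (hx : x = (1, 0)) (hy : y = (1, 1)) :
    N x = 1 ∧ N y = 1 ∧ (∀ s : ℝ, N (x + s • y) ≥ N x) ∧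
    ∀ t : ℝ, 1 ≤ t → N (x + t • y) = 1 + t ∧ N (t • x - y) = t := by
  obtain rfl : N = mixedNorm := funext hN
  subst hx hy
  have hx_unit : mixedNorm (1, 0) = 1 := by simp [mixedNorm.eq_max_of_mul_nonneg]
  refine ⟨hx_unit, by simp [mixedNorm.eq_max_of_mul_nonneg], fun s => ?_, fun t ht => ⟨?_, ?_⟩⟩
  · simpa [hx_unit] using mixedNorm.abs_fst_sub_snd_le (1 + s, s)
  · rw [show (1, 0) + t • (1, 1) = ((1 + t, t) : ℝ × ℝ) by simp [add_comm],
      mixedNorm.eq_max_of_mul_nonneg (by simp only; positivity)]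
    simp only [abs_of_nonneg (by linarith : (0 : ℝ) ≤ 1 + t), abs_of_nonneg (by linarith : 0 ≤ t)]
    exact max_eq_left (by linarith)
  · rw [show t • (1, 0) - (1, 1) = ((t - 1, -1) : ℝ × ℝ) by simp,
      mixedNorm.eq_abs_add_abs_of_mul_nonpos (by simp only; linarith)]
    simp [abs_of_nonneg (by linarith : (0 : ℝ) ≤ t - 1)]
end

section
/- Let X be a uniformly convex real Banach space (or, more generally, assume δ_X(1) > 0 where δ_X is the modulus of convexity), let 0 < t ≤ 1, and let x, y be unit vectors with x Birkhoff-orthogonal to y. Then (‖x + t·y‖ − ‖t·x − y‖)/t ≤ (1 − 2t·δ_X(1))/t. -/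
/-!
Birkhoff orthogonality gives `‖x - y‖ ≥ 1`, so the definition of `δ_X(1)` bounds the midpoint:
`‖x + y‖ ≤ 2 (1 - δ_X(1))`. Convexity of the norm along the segment from `x` to `x + y` then gives
`‖x + t y‖ ≤ t ‖x + y‖ + 1 - t`, while orthogonality of `x` to `t⁻¹ y` gives `‖t x - y‖ ≥ t`.
-/

/-- The modulus of convexity of a real normed space `X` at `ε`. -/
noncomputable def modulusConvexity (X : Type*) [NormedAddCommGroup X] [NormedSpace ℝ X]
    (ε : ℝ) : ℝ :=
  sInf {d : ℝ | ∃ x y : X, ‖x‖ ≤ 1 ∧ ‖y‖ ≤ 1 ∧ ε ≤ ‖x - y‖ ∧ d = 1 - ‖x + y‖ / 2}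

section

variable {X : Type*} [NormedAddCommGroup X] [NormedSpace ℝ X]

theorem norm_add_le_two_mul_one_sub_modulusConvexity {ε : ℝ} {x y : X} (hx : ‖x‖ ≤ 1)
    (hy : ‖y‖ ≤ 1) (hε : ε ≤ ‖x - y‖) : ‖x + y‖ ≤ 2 * (1 - modulusConvexity X ε) := by
  have hδ : modulusConvexity X ε ≤ 1 - ‖x + y‖ / 2 := by
    refine csInf_le ⟨0, ?_⟩ ⟨x, y, hx, hy, hε, rfl⟩
    rintro d ⟨a, b, ha, hb, -, rfl⟩
    linarith [norm_add_le a b]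
  linarith

theorem norm_add_smul_le_of_mem_unitInterval (x y : X) {t : ℝ} (ht0 : 0 ≤ t) (ht1 : t ≤ 1) :
    ‖x + t • y‖ ≤ t * ‖x + y‖ + (1 - t) * ‖x‖ := by
  have hsplit : x + t • y = t • (x + y) + (1 - t) • x := by
    rw [smul_add, sub_smul, one_smul]; abel
  calc ‖x + t • y‖ = ‖t • (x + y) + (1 - t) • x‖ := by rw [hsplit]
    _ ≤ ‖t • (x + y)‖ + ‖(1 - t) • x‖ := norm_add_le _ _
    _ = t * ‖x + y‖ + (1 - t) * ‖x‖ := by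
      rw [norm_smul, norm_smul, Real.norm_of_nonneg ht0, Real.norm_of_nonneg (by linarith)]

theorem abs_mul_norm_le_norm_smul_sub {x y : X} (hB : ∀ s : ℝ, ‖x‖ ≤ ‖x + s • y‖) (t : ℝ) :
    |t| * ‖x‖ ≤ ‖t • x - y‖ := by
  rcases eq_or_ne t 0 with rfl | ht
  · simp
  calc |t| * ‖x‖ ≤ |t| * ‖x + (-t⁻¹) • y‖ := by gcongr; exact hB _
    _ = ‖t • x - y‖ := by
      rw [← Real.norm_eq_abs, ← norm_smul, smul_add, smul_smul, mul_neg, mul_inv_cancel₀ ht,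
        neg_one_smul, sub_eq_add_neg]

end

theorem stmt_16_general {X : Type*} [NormedAddCommGroup X] [NormedSpace ℝ X]
    (t : ℝ) (ht0 : 0 < t) (ht1 : t ≤ 1) (x y : X)
    (hx : ‖x‖ = 1) (hy : ‖y‖ = 1) (hB : ∀ s : ℝ, ‖x + s • y‖ ≥ ‖x‖) :
    (‖x + t • y‖ - ‖t • x - y‖) / t ≤ (1 - 2 * t * modulusConvexity X 1) / t := by
  have hsub : 1 ≤ ‖x - y‖ := by simpa [hx, sub_eq_add_neg] using hB (-1)
  have hsum := norm_add_le_two_mul_one_sub_modulusConvexity hx.le hy.le hsub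
  have hconv := norm_add_smul_le_of_mem_unitInterval x y ht0.le ht1
  have horth := abs_mul_norm_le_norm_smul_sub hB t
  rw [hx] at hconv horth
  rw [abs_of_pos ht0] at horth
  refine div_le_div_of_nonneg_right ?_ ht0.le
  linarith [mul_le_mul_of_nonneg_left hsum ht0.le]

theorem stmt_16 {X : Type*} [NormedAddCommGroup X] [NormedSpace ℝ X] [CompleteSpace X]
    (hδ : 0 < modulusConvexity X 1)
    (t : ℝ) (ht0 : 0 < t) (ht1 : t ≤ 1) (x y : X)
    (hx : ‖x‖ = 1) (hy : ‖y‖ = 1) (hB : ∀ s : ℝ, ‖x + s • y‖ ≥ ‖x‖) :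
    (‖x + t • y‖ - ‖t • x - y‖) / t ≤ (1 - 2 * t * modulusConvexity X 1) / t :=
  stmt_16_general t ht0 ht1 x y hx hy hB
end

section
/- Let X be a real normed space, t ≥ 1, and x, y unit vectors with x Birkhoff-orthogonal to y. Then (‖x + t·y‖ − ‖t·x − y‖)/t ≤ ‖x + y‖ − 1. -/
/-!
Move `x + t • y` to `x + y` at cost `t - 1`, and use Birkhoff orthogonality at the scalar `-1/t`
to get `‖t • x - y‖ ≥ t`; the numerator is then at most `‖x + y‖ - 1`, which is nonnegative
(orthogonality at `s = 1`), so dividing by `t ≥ 1` only decreases it.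
-/

section BirkhoffOrthogonal

variable {E : Type*} [SeminormedAddCommGroup E] [NormedSpace ℝ E]

def BirkhoffOrthogonal (x y : E) : Prop :=
  ∀ s : ℝ, ‖x‖ ≤ ‖x + s • y‖

theorem norm_add_smul_le_norm_add_add (x y : E) (t : ℝ) :
    ‖x + t • y‖ ≤ ‖x + y‖ + |t - 1| * ‖y‖ := by
  have hsplit : x + t • y = (x + y) + (t - 1) • y := by
    rw [sub_smul, one_smul]; abel
  rw [hsplit, ← Real.norm_eq_abs, ← norm_smul]
  exact norm_add_le _ _

namespace BirkhoffOrthogonal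

variable {x y : E}

theorem norm_le_norm_add (h : BirkhoffOrthogonal x y) : ‖x‖ ≤ ‖x + y‖ := by
  simpa using h 1

theorem abs_mul_norm_le_norm_smul_sub (h : BirkhoffOrthogonal x y) (t : ℝ) :
    |t| * ‖x‖ ≤ ‖t • x - y‖ := by
  rcases eq_or_ne t 0 with rfl | ht
  · simp
  have hfactor : t • x - y = t • (x + (-t⁻¹) • y) := by
    rw [smul_add, smul_smul, mul_neg, mul_inv_cancel₀ ht, neg_one_smul, sub_eq_add_neg]
  rw [hfactor, norm_smul, Real.norm_eq_abs]
  exact mul_le_mul_of_nonneg_left (h _) (abs_nonneg t)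

end BirkhoffOrthogonal

end BirkhoffOrthogonal

theorem stmt_17 {X : Type*} [NormedAddCommGroup X] [NormedSpace ℝ X] (x y : X)
    (hx : ‖x‖ = 1) (hy : ‖y‖ = 1) (hB : ∀ s : ℝ, ‖x + s • y‖ ≥ ‖x‖)
    (t : ℝ) (ht : 1 ≤ t) :
    (‖x + t • y‖ - ‖t • x - y‖) / t ≤ ‖x + y‖ - 1 := by
  have horth : BirkhoffOrthogonal x y := hB
  have hupper : ‖x + t • y‖ ≤ ‖x + y‖ + (t - 1) := by
    simpa [hy, abs_of_nonneg (sub_nonneg.mpr ht)] using norm_add_smul_le_norm_add_add x y t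
  have hlower : t ≤ ‖t • x - y‖ := by
    simpa [hx, abs_of_nonneg (zero_le_one.trans ht)] using horth.abs_mul_norm_le_norm_smul_sub t
  have hgap : 0 ≤ ‖x + y‖ - 1 := by
    linarith [hx ▸ horth.norm_le_norm_add]
  calc (‖x + t • y‖ - ‖t • x - y‖) / t ≤ (‖x + y‖ - 1) / t :=
        div_le_div_of_nonneg_right (by linarith) (zero_le_one.trans ht)
    _ ≤ ‖x + y‖ - 1 := div_le_self hgap ht
end
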